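/- For α ≥ 2 and u sufficiently large (u ≥ (c₁+c₂+λ)^{2/3} suffices for suitable constants), the one-dimensional Schrödinger operator H_u - λ u^{-1-α/2} on L²(ℝ, dv), where H_u = -∂_v² + v²/(2√(u²+v²)) - 1/(√2(u²+v²)^{1/4}), has at most one negative eigenvalue. -/

import Mathlib

open MeasureTheory Set intervalIntegral

/-- Quadratic form of the shifted fiber operator `H_u - λ u^{-1-α/2}`, where
`H_u = -∂_v² + v²/(2√(u²+v²)) - 1/(√2 (u²+v²)^{1/4})` on `L²(ℝ,dv)`. -/
noncomputable def fiberForm (α lam u : ℝ) (φ : ℝ → ℂ) : ℝ :=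
  ∫ v : ℝ, (‖deriv φ v‖ ^ 2 +
    (v ^ 2 / (2 * Real.sqrt (u ^ 2 + v ^ 2))
      - 1 / (Real.sqrt 2 * (u ^ 2 + v ^ 2) ^ ((1 : ℝ) / 4))
      - lam * u ^ (-(1 + α / 2))) * ‖φ v‖ ^ 2)

set_option maxHeartbeats 1200000 in
lemma core (W : ℝ → ℝ) (hWcont : Continuous W) (L : ℝ) (hL : 0 < L)
    (hWneg : ∀ v : ℝ, |v| ≤ L → 0 ≤ W v + 3/L^2 - v^2/L^4)
    (hWpos : ∀ v : ℝ, L ≤ |v| → 0 ≤ W v)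
    (ψ : ℝ → ℂ) (hψ : ContDiff ℝ (⊤ : ℕ∞) ψ) (hsupp : HasCompactSupport ψ) (hψ0 : ψ 0 = 0) :
    0 ≤ ∫ v : ℝ, (‖deriv ψ v‖^2 + W v * ‖ψ v‖^2) := by
  have hdiff : Differentiable ℝ ψ := hψ.differentiable (by simp)
  have hc' : Continuous (deriv ψ) := hψ.continuous_deriv (by simp)
  obtain ⟨C, hC⟩ := hc'.bounded_above_of_compact_support hsupp.deriv
  set M : ℝ := max C 0 with hMdef
  have hM0 : 0 ≤ M := le_max_right _ _
  have hM : ∀ x, ‖deriv ψ x‖ ≤ M := fun x => (hC x).trans (le_max_left _ _)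
  have hψle : ∀ v : ℝ, ‖ψ v‖ ≤ M * |v| := by
    intro v
    have := Convex.norm_image_sub_le_of_norm_hasDerivWithin_le
      (f := ψ) (f' := deriv ψ) (s := Set.univ) (x := (0:ℝ)) (y := v)
      (fun x _ => (hdiff x).hasDerivAt.hasDerivWithinAt) (fun x _ => hM x)
      convex_univ trivial trivial
    simpa [hψ0, Real.norm_eq_abs] using this
  set N : ℝ → ℝ := fun v => Complex.normSq (ψ v) with hNdef
  set D : ℝ → ℝ := fun v => ((starRingEnd ℂ) (ψ v) * deriv ψ v).re with hDdef
  set φ₀ : ℝ → ℝ := fun v => if |v| ≤ L then 1/v - v/L^2 else 0 with hφ₀def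
  set F : ℝ → ℝ := fun v => φ₀ v * N v with hFdef
  set F' : ℝ → ℝ := fun v => (-(1/v^2) - 1/L^2) * N v + 2*(1/v - v/L^2) * D v with hF'def
  set G : ℝ → ℝ := fun v => ‖deriv ψ v‖^2 + W v * ‖ψ v‖^2 with hGdef
  have hL2 : (L:ℝ)^2 ≠ 0 := by positivity
  have hnormsq : ∀ z : ℂ, ‖z‖^2 = Complex.normSq z := by
    intro z; rw [Complex.sq_norm]
  have hN0 : N 0 = 0 := by simp [hNdef, hψ0]
  have hNnonneg : ∀ v, 0 ≤ N v := fun v => Complex.normSq_nonneg _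
  have hNle : ∀ v, N v ≤ M^2 * v^2 := by
    intro v
    have h1 := hψle v
    have : ‖ψ v‖^2 ≤ (M * |v|)^2 := by
      apply pow_le_pow_left₀ (norm_nonneg _) h1
    rw [hnormsq] at this
    calc N v ≤ (M*|v|)^2 := this
      _ = M^2 * v^2 := by rw [mul_pow, sq_abs]
  have hDle : ∀ v, |D v| ≤ M^2 * |v| := by
    intro v
    have h1 : |D v| ≤ ‖((starRingEnd ℂ) (ψ v) * deriv ψ v)‖ :=
      Complex.abs_re_le_norm _
    have h2 : ‖((starRingEnd ℂ) (ψ v) * deriv ψ v)‖ = ‖ψ v‖ * ‖deriv ψ v‖ := by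
      rw [norm_mul, Complex.norm_conj]
    calc |D v| ≤ ‖ψ v‖ * ‖deriv ψ v‖ := h2 ▸ h1
      _ ≤ (M * |v|) * M := by
          apply mul_le_mul (hψle v) (hM v) (norm_nonneg _)
          positivity
      _ = M^2 * |v| := by ring
  -- key pointwise identity
  have key : ∀ v : ℝ, |v| ≤ L →
      G v = Complex.normSq (deriv ψ v - (φ₀ v : ℂ) * ψ v)
        + (W v + 3/L^2 - v^2/L^4) * N v + F' v := by
    intro v hv
    rcases eq_or_ne v 0 with rfl | hv0
    · simp [hGdef, hF'def, hNdef, hDdef, hψ0, hnormsq, Complex.sq_norm]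
    · have hφ : φ₀ v = 1/v - v/L^2 := if_pos hv
      simp only [hGdef, hF'def, hφ, hnormsq, hNdef, hDdef]
      rw [Complex.normSq_apply, Complex.normSq_apply, Complex.normSq_apply]
      simp only [Complex.sub_re, Complex.sub_im, Complex.mul_re, Complex.mul_im,
        Complex.ofReal_re, Complex.ofReal_im, Complex.conj_re, Complex.conj_im]
      field_simp
      ring
  -- derivative of N
  have hNcont : Continuous N := Complex.continuous_normSq.comp hψ.continuous
  have hDcont : Continuous D := by
    apply Complex.continuous_re.comp
    exact ((Complex.continuous_conj.comp hψ.continuous).mul hc')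
  have hNd : ∀ x : ℝ, HasDerivAt N (2 * D x) x := by
    intro x
    have hz : HasDerivAt ψ (deriv ψ x) x := (hdiff x).hasDerivAt
    have hr : HasDerivAt (fun v => (ψ v).re) ((deriv ψ x).re) x :=
      Complex.reCLM.hasFDerivAt.comp_hasDerivAt x hz
    have hi : HasDerivAt (fun v => (ψ v).im) ((deriv ψ x).im) x :=
      Complex.imCLM.hasFDerivAt.comp_hasDerivAt x hz
    have hsum := (hr.mul hr).add (hi.mul hi)
    have hNeq : N = fun v => (ψ v).re * (ψ v).re + (ψ v).im * (ψ v).im := by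
      funext v; simp [hNdef, Complex.normSq_apply]
    rw [hNeq]
    refine hsum.congr_deriv ?_
    simp [hDdef, Complex.mul_re, Complex.conj_re, Complex.conj_im]
    ring
  have hFIcc : ∀ v ∈ Icc (-L) L, F v = (1/v - v/L^2) * N v := by
    intro v hv
    have : |v| ≤ L := abs_le.mpr ⟨hv.1, hv.2⟩
    simp [hFdef, hφ₀def, this]
  have hF0 : F 0 = 0 := by simp [hFdef, hN0]
  have hFbd : ∀ v : ℝ, |v| ≤ L → |F v| ≤ 2 * M^2 * |v| := by
    intro v hv
    rcases eq_or_ne v 0 with rfl | hv0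
    · simp [hFdef, hN0]
    · have hφ : φ₀ v = 1/v - v/L^2 := if_pos hv
      have hav : 0 < |v| := abs_pos.mpr hv0
      have habs : |φ₀ v| ≤ 1/|v| + |v|/L^2 := by
        rw [hφ]
        refine (abs_sub _ _).trans ?_
        rw [abs_div, abs_div, abs_one, abs_of_nonneg (by positivity : (0:ℝ) ≤ L^2)]
      have h1 : |F v| = |φ₀ v| * N v := by
        rw [hFdef, abs_mul, abs_of_nonneg (hNnonneg v)]
      rw [h1]
      have h2 : |φ₀ v| * N v ≤ (1/|v| + |v|/L^2) * (M^2 * v^2) :=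
        mul_le_mul habs (hNle v) (hNnonneg v) (by positivity)
      refine h2.trans ?_
      set a : ℝ := |v| with hadef
      have hsq : v^2 = a^2 := (sq_abs v).symm
      have he : (1/a + a/L^2) * (M^2 * v^2) = M^2 * a + M^2 * (a^3/L^2) := by
        rw [hsq]; field_simp
      rw [he]
      have hle1 : a^3/L^2 ≤ a := by
        rw [div_le_iff₀ (by positivity)]
        have h1 : a^2 ≤ L^2 := by nlinarith
        calc a^3 = a * a^2 := by ring
          _ ≤ a * L^2 := mul_le_mul_of_nonneg_left h1 hav.le
      nlinarith [sq_nonneg M]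
  have hFcont : ContinuousOn F (Icc (-L) L) := by
    intro x hx
    rcases eq_or_ne x 0 with rfl | hx0
    · rw [ContinuousWithinAt, hF0]
      have htend : Filter.Tendsto (fun v : ℝ => 2*M^2*|v|) (nhds 0) (nhds 0) := by
        have hcf : Continuous fun v : ℝ => 2*M^2*|v| :=
          Continuous.mul continuous_const continuous_abs
        have := hcf.tendsto (0:ℝ)
        simpa using this
      refine squeeze_zero_norm' ?_ (htend.mono_left nhdsWithin_le_nhds)
      filter_upwards [self_mem_nhdsWithin] with v hv
      exact (Real.norm_eq_abs _ ▸ hFbd v (abs_le.mpr ⟨hv.1, hv.2⟩))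
    · have hcont : ContinuousWithinAt (fun v => (1/v - v/L^2) * N v) (Icc (-L) L) x := by
        apply ContinuousWithinAt.mul _ hNcont.continuousAt.continuousWithinAt
        apply ContinuousWithinAt.sub
        · exact ((continuousAt_const.div continuousAt_id hx0)).continuousWithinAt
        · exact (continuousAt_id.div_const _).continuousWithinAt
      exact hcont.congr hFIcc (hFIcc x hx)
  have hFD : ∀ x ∈ Ioo (-L) L, x ≠ 0 → HasDerivAt F (F' x) x := by
    intro x hx hx0
    have hev : F =ᶠ[nhds x] fun v => (1/v - v/L^2) * N v := by
      filter_upwards [Ioo_mem_nhds hx.1 hx.2] with v hv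
      exact hFIcc v ⟨hv.1.le, hv.2.le⟩
    have h1 : HasDerivAt (fun v : ℝ => 1/v) (-(1/x^2)) x := by
      simpa [one_div] using hasDerivAt_inv hx0
    have h2 : HasDerivAt (fun v : ℝ => v/L^2) (1/L^2) x := by
      simpa using (hasDerivAt_id x).div_const (L^2)
    have ht : HasDerivAt (fun v : ℝ => 1/v - v/L^2) (-(1/x^2) - 1/L^2) x := h1.sub h2
    have hprod := ht.mul (hNd x)
    have : HasDerivAt (fun v => (1/v - v/L^2) * N v) (F' x) x := by
      refine hprod.congr_deriv ?_
      rw [hF'def]; ring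
    exact this.congr_of_eventuallyEq hev
  have hF'meas : Measurable F' := by
    have m1 : Measurable fun v : ℝ => (-(1/v^2) - 1/L^2) := by
      apply Measurable.sub _ measurable_const
      apply Measurable.neg
      exact (measurable_const.div ((measurable_id.pow_const 2)))
    have m2 : Measurable fun v : ℝ => (1/v - v/L^2) := by
      apply Measurable.sub
      · exact measurable_const.div measurable_id
      · exact measurable_id.div_const _
    exact ((m1.mul hNcont.measurable).add (((measurable_const.mul m2)).mul hDcont.measurable))
  have hF'bd : ∀ v : ℝ, |v| ≤ L → |F' v| ≤ 6 * M^2 := by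
    intro v hv
    rcases eq_or_ne v 0 with rfl | hv0
    · have hD0 : D 0 = 0 := by simp [hDdef, hψ0]
      simp [hF'def, hN0, hD0]
      positivity
    · have hav : 0 < |v| := abs_pos.mpr hv0
      have hsq : v^2 = |v|^2 := (sq_abs v).symm
      have hvL2 : v^2 ≤ L^2 := by nlinarith [abs_nonneg v]
      have hle1 : v^2/L^2 ≤ 1 := by rw [div_le_one (by positivity)]; exact hvL2
      have ha : |(-(1/v^2) - 1/L^2)| = 1/v^2 + 1/L^2 := by
        have h1 : (0:ℝ) ≤ 1/v^2 := by positivity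
        have h2 : (0:ℝ) ≤ 1/L^2 := by positivity
        rw [abs_of_nonpos (by linarith)]; ring
      have hb : |1/v - v/L^2| ≤ 1/|v| + |v|/L^2 := by
        refine (abs_sub _ _).trans ?_
        rw [abs_div, abs_div, abs_one, abs_of_nonneg (by positivity : (0:ℝ) ≤ L^2)]
      have h1 : |(-(1/v^2) - 1/L^2) * N v| ≤ (1/v^2 + 1/L^2) * (M^2 * v^2) := by
        rw [abs_mul, abs_of_nonneg (hNnonneg v), ha]
        exact mul_le_mul_of_nonneg_left (hNle v) (by positivity)
      have h2 : |2*(1/v - v/L^2) * D v| ≤ 2*(1/|v| + |v|/L^2) * (M^2 * |v|) := by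
        rw [abs_mul, abs_mul, abs_two]
        apply mul_le_mul _ (hDle v) (abs_nonneg _) (by positivity)
        exact mul_le_mul_of_nonneg_left hb (by norm_num)
      have e1 : (1/v^2 + 1/L^2) * (M^2 * v^2) = M^2 + M^2*(v^2/L^2) := by
        field_simp
      have e2 : 2*(1/|v| + |v|/L^2) * (M^2 * |v|) = 2*M^2 + 2*M^2*(v^2/L^2) := by
        rw [hsq]; field_simp
      calc |F' v| ≤ |(-(1/v^2) - 1/L^2) * N v| + |2*(1/v - v/L^2) * D v| := by
            rw [hF'def]; exact abs_add_le _ _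
        _ ≤ (M^2 + M^2*(v^2/L^2)) + (2*M^2 + 2*M^2*(v^2/L^2)) := by
            rw [← e1, ← e2]; exact add_le_add h1 h2
        _ ≤ 6 * M^2 := by nlinarith [sq_nonneg M]
  have hF'int : IntegrableOn F' (Icc (-L) L) := by
    apply Measure.integrableOn_of_bounded (M := 6*M^2) measure_Icc_lt_top.ne
      hF'meas.aestronglyMeasurable
    refine (ae_restrict_iff' measurableSet_Icc).2 (Filter.Eventually.of_forall ?_)
    intro v hv
    exact (Real.norm_eq_abs _ ▸ hF'bd v (abs_le.mpr ⟨hv.1, hv.2⟩))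
  have hF'ii1 : IntervalIntegrable F' volume 0 L := by
    rw [intervalIntegrable_iff, uIoc_of_le hL.le]
    exact hF'int.mono_set (fun x hx => ⟨by linarith [hx.1.le, hL.le], hx.2⟩)
  have hF'ii2 : IntervalIntegrable F' volume (-L) 0 := by
    rw [intervalIntegrable_iff, uIoc_of_le (by linarith)]
    exact hF'int.mono_set (fun x hx => ⟨hx.1.le, by linarith [hx.2]⟩)
  have hGcont : Continuous G := by
    rw [hGdef]
    exact (hc'.norm.pow 2).add (hWcont.mul ((hψ.continuous.norm).pow 2))
  -- FTC on the two inner pieces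
  have hFTC1 : ∫ v in (0:ℝ)..L, F' v = F L - F 0 := by
    apply integral_eq_sub_of_hasDeriv_right_of_le hL.le
      (hFcont.mono (Icc_subset_Icc (by linarith) le_rfl))
      (fun x hx => (hFD x ⟨by linarith [hx.1], hx.2⟩ (ne_of_gt hx.1)).hasDerivWithinAt)
      hF'ii1
  have hFTC2 : ∫ v in (-L:ℝ)..0, F' v = F 0 - F (-L) := by
    apply integral_eq_sub_of_hasDeriv_right_of_le (by linarith : (-L:ℝ) ≤ 0)
      (hFcont.mono (Icc_subset_Icc le_rfl (by linarith)))
      (fun x hx => (hFD x ⟨hx.1, by linarith [hx.2]⟩ (ne_of_lt hx.2)).hasDerivWithinAt)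
      hF'ii2
  have hFL : F L = 0 := by
    have h1 : F L = (1/L - L/L^2) * N L := hFIcc L ⟨by linarith, le_rfl⟩
    have h2 : 1/L - L/L^2 = 0 := by
      have hLne : L ≠ 0 := hL.ne'
      rw [pow_two, div_mul_cancel_left₀ hLne, one_div, sub_self]
    rw [h1, h2, zero_mul]
  have hFmL : F (-L) = 0 := by
    have h1 : F (-L) = (1/(-L) - (-L)/L^2) * N (-L) := hFIcc (-L) ⟨le_rfl, by linarith⟩
    have h2 : 1/(-L) - (-L)/L^2 = 0 := by
      have hLne : L ≠ 0 := hL.ne'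
      rw [pow_two, neg_div, div_mul_cancel_left₀ hLne, one_div, inv_neg, sub_neg_eq_add,
        neg_add_cancel]
    rw [h1, h2, zero_mul]
  -- nonnegativity of inner pieces
  have hinner : ∀ a b : ℝ, a ≤ b → Icc a b ⊆ Icc (-L) L →
      IntervalIntegrable F' volume a b →
      (∫ v in a..b, F' v = 0) → 0 ≤ ∫ v in a..b, G v := by
    intro a b hab hsub hii hzero
    have hGii : IntervalIntegrable G volume a b := hGcont.intervalIntegrable _ _
    have hdiffii : IntervalIntegrable (fun v => G v - F' v) volume a b := hGii.sub hii
    have hsplit : ∫ v in a..b, G v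
        = (∫ v in a..b, (G v - F' v)) + ∫ v in a..b, F' v := by
      rw [← intervalIntegral.integral_add hdiffii hii]
      congr 1; funext v; ring
    rw [hsplit, hzero, add_zero]
    apply intervalIntegral.integral_nonneg hab
    intro v hv
    have hvIcc := hsub hv
    have hvL : |v| ≤ L := abs_le.mpr ⟨hvIcc.1, hvIcc.2⟩
    have hkey := key v hvL
    have h2 : G v - F' v = Complex.normSq (deriv ψ v - (φ₀ v : ℂ) * ψ v)
        + (W v + 3/L^2 - v^2/L^4) * N v := by linarith
    rw [h2]
    exact add_nonneg (Complex.normSq_nonneg _) (mul_nonneg (hWneg v hvL) (hNnonneg v))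
  have hpiece3 : 0 ≤ ∫ v in (0:ℝ)..L, G v := by
    apply hinner 0 L hL.le (Icc_subset_Icc (by linarith) le_rfl) hF'ii1
    rw [hFTC1, hFL, hF0, sub_zero]
  have hpiece2 : 0 ≤ ∫ v in (-L:ℝ)..0, G v := by
    apply hinner (-L) 0 (by linarith) (Icc_subset_Icc le_rfl (by linarith)) hF'ii2
    rw [hFTC2, hFmL, hF0, sub_zero]
  -- support radius
  obtain ⟨r, hr⟩ := hsupp.isBounded.subset_closedBall 0
  set R : ℝ := max r L + 1 with hRdef
  have hLR : L ≤ R := by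
    have := le_max_right r L; linarith
  have hrR : r < R := by
    have := le_max_left r L; linarith
  have hR0 : 0 < R := by linarith
  have hψR : ∀ v : ℝ, r < |v| → ψ v = 0 ∧ deriv ψ v = 0 := by
    intro v hv
    have hvt : v ∉ tsupport ψ := by
      intro hmem
      have h3 := hr hmem
      rw [Metric.mem_closedBall, Real.dist_eq, sub_zero] at h3
      exact absurd h3 (not_le.mpr hv)
    exact ⟨image_eq_zero_of_notMem_tsupport hvt,
      Function.notMem_support.mp fun hs => hvt (support_deriv_subset hs)⟩
  have hGzero : ∀ v : ℝ, v ∉ Ioc (-R) R → G v = 0 := by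
    intro v hv
    rw [mem_Ioc, not_and_or, not_lt, not_le] at hv
    have hvabs : r < |v| := by
      rcases hv with h | h
      · rw [abs_of_nonpos (by linarith)]; linarith
      · rw [abs_of_pos (by linarith)]; linarith
    obtain ⟨h1, h2⟩ := hψR v hvabs
    simp [hGdef, h1, h2]
  have hpiece1 : 0 ≤ ∫ v in (-R:ℝ)..(-L), G v := by
    apply intervalIntegral.integral_nonneg (by linarith)
    intro v hv
    have hvL : L ≤ |v| := by
      rw [abs_of_nonpos (by linarith [hv.2])]; linarith [hv.2]
    have hW := hWpos v hvL
    rw [hGdef]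
    exact add_nonneg (by positivity) (mul_nonneg hW (by positivity))
  have hpiece4 : 0 ≤ ∫ v in (L:ℝ)..R, G v := by
    apply intervalIntegral.integral_nonneg (by linarith)
    intro v hv
    have hvL : L ≤ |v| := by
      rw [abs_of_pos (by linarith [hv.1])]; linarith [hv.1]
    have hW := hWpos v hvL
    rw [hGdef]
    exact add_nonneg (by positivity) (mul_nonneg hW (by positivity))
  -- assemble
  have i1 : IntervalIntegrable G volume (-R) (-L) := hGcont.intervalIntegrable _ _
  have i2 : IntervalIntegrable G volume (-L) 0 := hGcont.intervalIntegrable _ _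
  have i3 : IntervalIntegrable G volume 0 L := hGcont.intervalIntegrable _ _
  have i4 : IntervalIntegrable G volume L R := hGcont.intervalIntegrable _ _
  have e1 := integral_add_adjacent_intervals i1 i2
  have e2 := integral_add_adjacent_intervals (i1.trans i2) i3
  have e3 := integral_add_adjacent_intervals ((i1.trans i2).trans i3) i4
  have hmain : ∫ v : ℝ, G v = ∫ v in (-R:ℝ)..R, G v := by
    rw [intervalIntegral.integral_of_le (by linarith : (-R:ℝ) ≤ R)]
    exact (setIntegral_eq_integral_of_forall_compl_eq_zero hGzero).symm
  have : (0:ℝ) ≤ ∫ v in (-R:ℝ)..R, G v := by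
    rw [← e3, ← e2, ← e1]
    linarith
  calc (0:ℝ) ≤ ∫ v in (-R:ℝ)..R, G v := this
    _ = ∫ v : ℝ, G v := hmain.symm

set_option maxHeartbeats 4000000 in
/-- For `α ≥ 2`, `λ > 0` and `u` sufficiently large, the operator
`H_u - λ u^{-1-α/2}` has at most one negative eigenvalue: expressed
variationally, there is no two-dimensional subspace of `C_c^∞(ℝ)` on which its
quadratic form is negative definite. -/
theorem fiber_at_most_one_negative_eigenvalue (α : ℝ) (hα : 2 ≤ α)
    (lam : ℝ) (hlam : 0 < lam) :
    ∃ u₀ : ℝ, 0 < u₀ ∧ ∀ u : ℝ, u₀ ≤ u →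
      ∀ φ : Fin 2 → (ℝ → ℂ),
        (∀ i, ContDiff ℝ (⊤ : ℕ∞) (φ i)) → (∀ i, HasCompactSupport (φ i)) →
        LinearIndependent ℂ φ →
        ∃ a : Fin 2 → ℂ, (∑ i, a i • φ i) ≠ 0
          ∧ 0 ≤ fiberForm α lam u (∑ i, a i • φ i) := by
    classical
  refine ⟨4 + 20*lam, by linarith, ?_⟩
  intro u hu φ hφs hφc hli
  have hu4 : (4:ℝ) ≤ u := by linarith
  have hu1 : (1:ℝ) ≤ u := by linarith
  have hu0 : (0:ℝ) < u := by linarith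
  have hu20 : 20*lam ≤ u := by linarith
  -- choose coefficients making the combination vanish at 0
  obtain ⟨a, ha, haz⟩ : ∃ a : Fin 2 → ℂ, a ≠ 0 ∧ a 0 * φ 0 0 + a 1 * φ 1 0 = 0 := by
    by_cases h : φ 0 0 = 0 ∧ φ 1 0 = 0
    · exact ⟨![1, 0], by
        intro hc
        have := congrFun hc 0
        simp at this, by simp [h.1, h.2]⟩
    · refine ⟨![φ 1 0, -(φ 0 0)], ?_, by simp; ring⟩
      intro hc
      apply h
      constructor
      · have := congrFun hc 1
        simpa using this
      · have := congrFun hc 0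
        simpa using this
  set ψ : ℝ → ℂ := ∑ i, a i • φ i with hψdef
  clear_value ψ
  have hψeval : ∀ x, ψ x = a 0 * φ 0 x + a 1 * φ 1 x := by
    intro x
    rw [hψdef]
    simp [Fin.sum_univ_two, smul_eq_mul]
  have hψ0 : ψ 0 = 0 := by rw [hψeval 0]; exact haz
  have hψs : ContDiff ℝ (⊤ : ℕ∞) ψ := by
    have : ψ = fun x => a 0 * φ 0 x + a 1 * φ 1 x := funext hψeval
    rw [this]
    exact (((hφs 0).const_smul (a 0)).add ((hφs 1).const_smul (a 1)))
  have hψc : HasCompactSupport ψ := by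
    have : ψ = fun x => a 0 * φ 0 x + a 1 * φ 1 x := funext hψeval
    rw [this]
    exact ((hφc 0).mul_left).add ((hφc 1).mul_left)
  have hψne : ψ ≠ 0 := by
    intro hc
    apply ha
    funext i
    exact Fintype.linearIndependent_iff.mp hli a (hψdef ▸ hc) i
  refine ⟨a, hψdef ▸ hψne, ?_⟩
  rw [← hψdef]
  -- arithmetic setup
  set s2 : ℝ := Real.sqrt 2 with hs2def
  set su : ℝ := Real.sqrt u with hsudef
  clear_value s2 su
  have hs2pos : 0 < s2 := by rw [hs2def]; exact Real.sqrt_pos.mpr (by norm_num)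
  have hs2sq : s2^2 = 2 := by rw [hs2def]; exact Real.sq_sqrt (by norm_num)
  have hs2lb : 1.41 ≤ s2 := by nlinarith
  have hs2ub : s2 ≤ 1.5 := by nlinarith
  have hsupos : 0 < su := by rw [hsudef]; exact Real.sqrt_pos.mpr hu0
  have hsusq : su^2 = u := by rw [hsudef]; exact Real.sq_sqrt hu0.le
  have hs2ne : s2 ≠ 0 := hs2pos.ne'
  have hsune : su ≠ 0 := hsupos.ne'
  have hune : u ≠ 0 := hu0.ne'
  have hsu2 : 2 ≤ su := by nlinarith
  have hsuleu : su ≤ u := by nlinarith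
  set β : ℝ := 1/(s2 * su) + lam * u ^ (-(1+α/2)) with hβdef
  clear_value β
  have hrppos : 0 < u ^ (-(1+α/2)) := Real.rpow_pos_of_pos hu0 _
  have hβpos : 0 < β := by rw [hβdef]; positivity
  -- bound on the rpow term
  have hrp1 : u ^ (-(1+α/2)) ≤ u ^ ((-2 : ℝ)) :=
    Real.rpow_le_rpow_of_exponent_le hu1 (by linarith)
  have hrp2 : u ^ ((-2:ℝ)) = (u^2)⁻¹ := by
    rw [show ((-2:ℝ)) = -((2:ℕ):ℝ) by norm_num, Real.rpow_neg hu0.le, Real.rpow_natCast]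
  have hlamterm : lam * u ^ (-(1+α/2)) ≤ 1/(20*su) := by
    have h1 : lam * u ^ (-(1+α/2)) ≤ lam * (u^2)⁻¹ := by
      rw [← hrp2]
      exact mul_le_mul_of_nonneg_left hrp1 hlam.le
    refine h1.trans ?_
    have h2 : lam * (u^2)⁻¹ ≤ (u/20) * (u^2)⁻¹ :=
      mul_le_mul_of_nonneg_right (by linarith) (by positivity)
    have h3 : (u/20) * (u^2)⁻¹ = 1/(20*u) := by
      field_simp
    have h4 : 1/(20*u) ≤ 1/(20*su) :=
      one_div_le_one_div_of_le (by positivity) (by nlinarith)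
    rw [h3] at h2
    exact h2.trans h4
  -- β upper bound
  have hβub : β ≤ 0.76/su := by
    have h1 : 1/(s2*su) ≤ 0.71/su := by
      rw [div_le_div_iff₀ (by positivity) (by positivity)]
      nlinarith
    have h2 : (1:ℝ)/(20*su) = 0.05/su := by
      rw [div_eq_div_iff (by positivity) (by positivity)]
      ring
    have h3 := hlamterm
    rw [h2] at h3
    have hsum : (0.71:ℝ)/su + 0.05/su = 0.76/su := by
      rw [← add_div]
      norm_num
    rw [hβdef]
    linarith
  have hsuβ : su * β ≤ 0.76 := by
    have h1 := mul_le_mul_of_nonneg_left hβub hsupos.le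
    have h2 : su * (0.76/su) = 0.76 := by field_simp
    linarith
  have huβ2 : u * β^2 ≤ 0.5776 := by
    have h1 : (su*β)^2 ≤ 0.76^2 :=
      pow_le_pow_left₀ (mul_nonneg hsupos.le hβpos.le) hsuβ 2
    have h2 : (su*β)^2 = u * β^2 := by rw [mul_pow, hsusq]
    rw [h2] at h1
    have h3 : (0.76:ℝ)^2 = 0.5776 := by norm_num
    linarith
  set L : ℝ := Real.sqrt (2*s2*u*β) with hLdef
  clear_value L
  have hargpos : 0 < 2*s2*u*β := by positivity
  have hLpos : 0 < L := by rw [hLdef]; exact Real.sqrt_pos.mpr hargpos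
  have hLsq : L^2 = 2*s2*u*β := by rw [hLdef]; exact Real.sq_sqrt hargpos.le
  have hLne : L ≠ 0 := hLpos.ne'
  have hβL2 : β * L^2 ≤ 2 := by
    rw [hLsq]
    have e : β*(2*s2*u*β) = 2*(s2*(u*β^2)) := by ring
    rw [e]
    have hx : s2*(u*β^2) ≤ 1.5*0.5776 :=
      mul_le_mul hs2ub huβ2 (mul_nonneg hu0.le (sq_nonneg β)) (by norm_num)
    nlinarith [hx]
  have hβ2L : β ≤ 2/L^2 := by
    rw [le_div_iff₀ (by positivity)]
    linarith [hβL2]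
  have hLu : L ≤ u := by
    have h2 : u * β ≤ 0.76*su := by
      calc u*β = su*(su*β) := by rw [← mul_assoc, ← pow_two, hsusq]
        _ ≤ su*0.76 := mul_le_mul_of_nonneg_left hsuβ hsupos.le
        _ = 0.76*su := mul_comm _ _
    have h1 : L^2 ≤ u^2 := by
      rw [hLsq]
      have hsu4 : u^2 = su^4 := by rw [← hsusq]; ring
      rw [hsu4]
      have hsu3 : 8 ≤ su^3 := by nlinarith [hsu2, hsupos]
      have h2' : 2*s2*(u*β) ≤ 2*1.5*(0.76*su) := by
        have : (2:ℝ)*s2 ≤ 2*1.5 := by linarith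
        apply mul_le_mul this h2 (mul_nonneg hu0.le hβpos.le) (by norm_num)
      nlinarith [mul_le_mul_of_nonneg_left hsu3 hsupos.le, hsupos]
    nlinarith [hLpos, hu0]
  -- the potential
  set W : ℝ → ℝ := fun v => v ^ 2 / (2 * Real.sqrt (u ^ 2 + v ^ 2))
      - 1 / (s2 * (u ^ 2 + v ^ 2) ^ ((1 : ℝ) / 4))
      - lam * u ^ (-(1 + α / 2)) with hWdef
  clear_value W
  have hposuv : ∀ v : ℝ, 0 < u^2 + v^2 := fun v => by positivity
  have hquarter : ∀ v : ℝ, su ≤ (u^2+v^2) ^ ((1:ℝ)/4) := by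
    intro v
    have h1 : (u^2) ^ ((1:ℝ)/4) ≤ (u^2+v^2) ^ ((1:ℝ)/4) :=
      Real.rpow_le_rpow (by positivity) (by nlinarith [sq_nonneg v]) (by norm_num)
    have h2 : (u^2) ^ ((1:ℝ)/4) = su := by
      rw [← Real.rpow_natCast u 2, ← Real.rpow_mul hu0.le, hsudef, Real.sqrt_eq_rpow]
      norm_num
    linarith
  have hT2 : ∀ v : ℝ, 1/(s2 * (u^2+v^2) ^ ((1:ℝ)/4)) ≤ 1/(s2*su) := by
    intro v
    apply one_div_le_one_div_of_le (by positivity)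
    exact mul_le_mul_of_nonneg_left (hquarter v) hs2pos.le
  have hWlb : ∀ v : ℝ, -β ≤ W v := by
    intro v
    have h1 : 0 ≤ v^2/(2*Real.sqrt (u^2+v^2)) := by positivity
    have h2 := hT2 v
    simp only [hWdef, hβdef]
    linarith
  have hWneg : ∀ v : ℝ, |v| ≤ L → 0 ≤ W v + 3/L^2 - v^2/L^4 := by
    intro v hv
    have hv2 : v^2 ≤ L^2 := by nlinarith [sq_abs v, abs_nonneg v]
    have hrw : W v + 3/L^2 - v^2/L^4 = (W v * L^4 + 3*L^2 - v^2)/L^4 := by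
      field_simp
    rw [hrw]
    apply div_nonneg _ (by positivity)
    nlinarith [mul_le_mul_of_nonneg_right (hWlb v) (by positivity : (0:ℝ) ≤ L^4),
      mul_le_mul_of_nonneg_right hβL2 (sq_nonneg L), hv2]
  have hWpos : ∀ v : ℝ, L ≤ |v| → 0 ≤ W v := by
    intro v hv
    have habs0 : 0 < |v| := lt_of_lt_of_le hLpos hv
    have hsqrtpos : 0 < Real.sqrt (u^2+v^2) := Real.sqrt_pos.mpr (hposuv v)
    suffices hT1 : β ≤ v^2/(2*Real.sqrt (u^2+v^2)) by
      have h2 := hT2 v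
      rw [hβdef] at hT1
      simp only [hWdef]
      linarith
    rcases le_or_gt (|v|) u with hcase | hcase
    · have hs : Real.sqrt (u^2+v^2) ≤ s2*u := by
        rw [show s2*u = Real.sqrt (2*u^2) by
          rw [hs2def, Real.sqrt_mul (by norm_num : (0:ℝ) ≤ 2), Real.sqrt_sq hu0.le]]
        apply Real.sqrt_le_sqrt
        nlinarith [sq_abs v]
      have hL2v2 : L^2 ≤ v^2 := by nlinarith [sq_abs v, abs_nonneg v]
      have h1 : L^2/(2*(s2*u)) ≤ v^2/(2*Real.sqrt (u^2+v^2)) := by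
        gcongr
      have hLval : L^2/(2*(s2*u)) = β := by
        rw [hLsq]
        field_simp
      linarith
    · have hs : Real.sqrt (u^2+v^2) ≤ s2*|v| := by
        rw [show s2*|v| = Real.sqrt (2*v^2) by
          rw [hs2def, Real.sqrt_mul (by norm_num : (0:ℝ) ≤ 2), Real.sqrt_sq_eq_abs]]
        apply Real.sqrt_le_sqrt
        nlinarith [sq_abs v]
      have h1 : v^2/(2*(s2*|v|)) ≤ v^2/(2*Real.sqrt (u^2+v^2)) := by
        gcongr
      have h2 : v^2/(2*(s2*|v|)) = |v|/(2*s2) := by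
        have habsne : |v| ≠ 0 := habs0.ne'
        field_simp
        rw [← sq_abs v]
      have hβ38 : β ≤ 0.38 := by
        have h5 : (0.76:ℝ)/su ≤ 0.38 := by
          rw [div_le_iff₀ hsupos]
          linarith
        linarith [hβub]
      have h3 : u/(2*s2) ≤ |v|/(2*s2) := by gcongr
      have hu3 : 1 ≤ u/(2*s2) := by
        rw [le_div_iff₀ (by positivity)]
        nlinarith
      rw [h2] at h1
      linarith
  have hWcont : Continuous W := by
    rw [hWdef]
    apply Continuous.sub
    apply Continuous.sub
    · apply Continuous.div (by fun_prop)
        (continuous_const.mul (Real.continuous_sqrt.comp (by fun_prop)))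
      intro v
      have := Real.sqrt_pos.mpr (hposuv v)
      exact (mul_pos two_pos this).ne'
    · apply Continuous.div continuous_const
        (continuous_const.mul ((by fun_prop : Continuous fun v : ℝ => u^2+v^2).rpow_const
          (fun v => Or.inr (by norm_num))))
      intro v
      have := Real.rpow_pos_of_pos (hposuv v) ((1:ℝ)/4)
      exact (mul_pos hs2pos this).ne'
    · exact continuous_const
  have hff : fiberForm α lam u ψ = ∫ v : ℝ, (‖deriv ψ v‖^2 + W v * ‖ψ v‖^2) := by
    simp only [fiberForm, hWdef, hs2def]
  rw [hff]
  exact core W hWcont L hLpos hWneg hWpos ψ hψs hψc hψ0
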